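/- Let x : [0,T] → ℝ^d be a C¹ path with A = sup_{t∈[0,T]} |ẋ_t| (sup over the max of coordinate derivatives). Define tree-indexed iterated integrals by X^{•_a}_{ts} = ∫_s^t dx^a_u and X^{[τ^1⋯τ^k]_a}_{ts} = ∫_s^t X^{τ^1}_{us}⋯X^{τ^k}_{us} dx^a_u. Then for every labeled rooted tree τ and all 0 ≤ s ≤ t ≤ T one has |X^τ_{ts}| ≤ (A(t−s))^{|τ|}/τ!. -/

import Mathlib

/-- `ℒ`-labeled rooted trees: `node a ts` grafts the trees in `ts`
onto a new root labeled `a`. -/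
inductive PTree (L : Type) : Type
  | node : L → List (PTree L) → PTree L

mutual
/-- Number of vertices of a labeled rooted tree. -/
def sizeT {L : Type} : PTree L → ℕ
  | .node _ ts => 1 + sizeF ts
/-- Number of vertices of a forest. -/
def sizeF {L : Type} : List (PTree L) → ℕ
  | [] => 0
  | t :: ts => sizeT t + sizeF ts
end

mutual
/-- Tree factorial: `•ₐ! = 1`, `[τ¹⋯τᵏ]ₐ! = |[τ¹⋯τᵏ]ₐ| · τ¹! ⋯ τᵏ!`. -/
def factT {L : Type} : PTree L → ℕ
  | .node _ ts => (1 + sizeF ts) * factF ts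
/-- Tree factorial extended multiplicatively to forests. -/
def factF {L : Type} : List (PTree L) → ℕ
  | [] => 1
  | t :: ts => factT t * factF ts
end

mutual
/-- Tree-indexed iterated integrals of the paths `x a`:
`X^{•ₐ}_{ts} = ∫_s^t dx^a_u`, `X^{[τ¹⋯τᵏ]ₐ}_{ts} = ∫_s^t X^{τ¹}_{us}⋯X^{τᵏ}_{us} dx^a_u`. -/
noncomputable def Xtree {L : Type} (x : L → ℝ → ℝ) : PTree L → ℝ → ℝ → ℝ
  | .node a ts => fun t s => ∫ u in s..t, XF x ts u s * deriv (x a) u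
/-- The iterated integrals extended multiplicatively to forests. -/
noncomputable def XF {L : Type} (x : L → ℝ → ℝ) : List (PTree L) → ℝ → ℝ → ℝ
  | [] => fun _ _ => 1
  | τ :: ts => fun t s => Xtree x τ t s * XF x ts t s
end

lemma sizeT_le_of_mem {L : Type} {τ : PTree L} : ∀ {ts : List (PTree L)}, τ ∈ ts → sizeT τ ≤ sizeF ts := by
  intro ts h
  induction ts with
  | nil => simp at h
  | cons t ts ih =>
    rcases List.mem_cons.1 h with h | h
    · subst h; simp [sizeF]
    · have := ih h; simp [sizeF]; omega

lemma tree_aux (d : ℕ) (x : Fin d → ℝ → ℝ)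
    (hx : ∀ a, ContDiff ℝ 1 (x a)) (T A : ℝ) (hT : 0 ≤ T)
    (hA : ∀ a, ∀ t ∈ Set.Icc (0 : ℝ) T, |deriv (x a) t| ≤ A) :
    ∀ n : ℕ, ∀ τ : PTree (Fin d), sizeT τ ≤ n →
      0 < factT τ ∧ (∀ s : ℝ, Continuous fun u => Xtree x τ u s) ∧
      (∀ s t : ℝ, 0 ≤ s → s ≤ t → t ≤ T →
        |Xtree x τ t s| ≤ (A * (t - s)) ^ (sizeT τ) / (factT τ : ℝ)) := by
  intro n
  induction n with
  | zero =>
    intro τ h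
    obtain ⟨a, ts⟩ := τ
    simp [sizeT] at h
  | succ n ih =>
    rintro ⟨a, ts⟩ hτ
    have hA0 : 0 ≤ A := le_trans (abs_nonneg _) (hA a 0 ⟨le_rfl, hT⟩)
    have hsz : sizeF ts ≤ n := by
      have : sizeT (PTree.node a ts) = 1 + sizeF ts := rfl
      omega
    -- forest facts
    have hmem : ∀ τ ∈ ts, sizeT τ ≤ n := fun τ hm => le_trans (sizeT_le_of_mem hm) hsz
    have hF : 0 < factF ts ∧ (∀ s : ℝ, Continuous fun u => XF x ts u s) ∧
        (∀ s t : ℝ, 0 ≤ s → s ≤ t → t ≤ T →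
          |XF x ts t s| ≤ (A * (t - s)) ^ (sizeF ts) / (factF ts : ℝ)) := by
      clear hτ hsz
      induction ts with
      | nil =>
        refine ⟨by simp [factF], fun s => by simp [XF]; exact continuous_const, ?_⟩
        intro s t hs hst htT
        simp [XF, sizeF, factF]
      | cons τ ts ihts =>
        have hτmem := hmem τ List.mem_cons_self
        obtain ⟨hfp, hcont, hbd⟩ := ih τ hτmem
        obtain ⟨hfp', hcont', hbd'⟩ := ihts (fun τ' hm => hmem τ' (List.mem_cons_of_mem _ hm))
        refine ⟨?_, ?_, ?_⟩
        · have : factF (τ :: ts) = factT τ * factF ts := rfl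
          rw [this]; positivity
        · intro s
          have : (fun u => XF x (τ :: ts) u s) = fun u => Xtree x τ u s * XF x ts u s := rfl
          rw [this]; exact (hcont s).mul (hcont' s)
        · intro s t hs hst htT
          have h1 := hbd s t hs hst htT
          have h2 := hbd' s t hs hst htT
          have hXF : XF x (τ :: ts) t s = Xtree x τ t s * XF x ts t s := rfl
          have hsF : sizeF (τ :: ts) = sizeT τ + sizeF ts := rfl
          have hfF : factF (τ :: ts) = factT τ * factF ts := rfl
          rw [hXF, hsF, hfF, abs_mul]
          calc |Xtree x τ t s| * |XF x ts t s|
              ≤ ((A * (t - s)) ^ sizeT τ / (factT τ : ℝ)) * ((A * (t - s)) ^ sizeF ts / (factF ts : ℝ)) :=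
                mul_le_mul h1 h2 (abs_nonneg _) (le_trans (abs_nonneg _) h1)
            _ = (A * (t - s)) ^ (sizeT τ + sizeF ts) / ((factT τ * factF ts : ℕ) : ℝ) := by
                push_cast
                rw [pow_add]
                ring
    obtain ⟨hfp, hcontF, hbdF⟩ := hF
    have hderiv : Continuous (deriv (x a)) := (hx a).continuous_deriv le_rfl
    have hXeq : ∀ t s : ℝ, Xtree x (PTree.node a ts) t s = ∫ u in s..t, XF x ts u s * deriv (x a) u := fun _ _ => rfl
    refine ⟨?_, ?_, ?_⟩
    · have : factT (PTree.node a ts) = (1 + sizeF ts) * factF ts := rfl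
      rw [this]; positivity
    · intro s
      have hc : Continuous fun u => XF x ts u s * deriv (x a) u := (hcontF s).mul hderiv
      have := intervalIntegral.continuous_primitive
        (f := fun u => XF x ts u s * deriv (x a) u) (μ := MeasureTheory.volume)
        (fun a b => hc.intervalIntegrable a b) s
      simpa [hXeq] using this
    · intro s t hs hst htT
      set k := sizeF ts with hk
      set fF : ℝ := (factF ts : ℝ) with hfF
      have hfF0 : 0 < fF := by rw [hfF]; exact_mod_cast hfp
      have hc : Continuous fun u => XF x ts u s * deriv (x a) u := (hcontF s).mul hderiv
      have hg : Continuous fun u : ℝ => A ^ (k + 1) * (u - s) ^ k / fF := by continuity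
      have hpt : ∀ u ∈ Set.Icc s t,
          |XF x ts u s * deriv (x a) u| ≤ A ^ (k + 1) * (u - s) ^ k / fF := by
        intro u hu
        have hu1 : (0:ℝ) ≤ u := le_trans hs hu.1
        have hu2 : u ≤ T := le_trans hu.2 htT
        have hb1 := hbdF s u hs hu.1 hu2
        have hb2 := hA a u ⟨hu1, hu2⟩
        rw [abs_mul]
        calc |XF x ts u s| * |deriv (x a) u|
            ≤ ((A * (u - s)) ^ k / fF) * A :=
              mul_le_mul hb1 hb2 (abs_nonneg _) (by have hus : (0:ℝ) ≤ u - s := sub_nonneg.2 hu.1; positivity)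
          _ = A ^ (k + 1) * (u - s) ^ k / fF := by rw [mul_pow, pow_succ]; ring
      have h1 : |Xtree x (PTree.node a ts) t s| ≤
          ∫ u in s..t, |XF x ts u s * deriv (x a) u| := by
        rw [hXeq]
        exact intervalIntegral.abs_integral_le_integral_abs hst
      have h2 : (∫ u in s..t, |XF x ts u s * deriv (x a) u|) ≤
          ∫ u in s..t, A ^ (k + 1) * (u - s) ^ k / fF := by
        apply intervalIntegral.integral_mono_on hst
          (hc.abs.intervalIntegrable s t) (hg.intervalIntegrable s t) hpt
      have h3 : (∫ u in s..t, A ^ (k + 1) * (u - s) ^ k / fF)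
          = A ^ (k + 1) / fF * ((t - s) ^ (k + 1) / (k + 1)) := by
        have e1 : (∫ u in s..t, (u - s) ^ k) = (t - s) ^ (k + 1) / (k + 1) := by
          rw [intervalIntegral.integral_comp_sub_right (fun u => u ^ k) s]
          simp [integral_pow]
        have : (fun u : ℝ => A ^ (k + 1) * (u - s) ^ k / fF)
            = fun u : ℝ => (A ^ (k + 1) / fF) * (u - s) ^ k := by
          funext u; ring
        rw [this, intervalIntegral.integral_const_mul, e1]
      have hsize : sizeT (PTree.node a ts) = 1 + k := rfl
      have hfact : factT (PTree.node a ts) = (1 + k) * factF ts := rfl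
      rw [hsize, hfact]
      calc |Xtree x (PTree.node a ts) t s|
          ≤ A ^ (k + 1) / fF * ((t - s) ^ (k + 1) / (k + 1)) := by
            rw [← h3]; exact le_trans h1 h2
        _ = (A * (t - s)) ^ (1 + k) / (((1 + k) * factF ts : ℕ) : ℝ) := by
            rw [mul_pow]
            push_cast
            rw [hfF]
            field_simp
            ring


/-- If `x : [0,T] → ℝ^d` is C¹ with `|ẋᵗ| ≤ A` on `[0,T]` (coordinatewise), then
`|X^τ_{ts}| ≤ (A(t−s))^{|τ|}/τ!` for every labeled rooted tree `τ` and `0 ≤ s ≤ t ≤ T`. -/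
theorem tree_iterated_integral_bound (d : ℕ) (x : Fin d → ℝ → ℝ)
    (hx : ∀ a, ContDiff ℝ 1 (x a)) (T A : ℝ) (hT : 0 ≤ T)
    (hA : ∀ a, ∀ t ∈ Set.Icc (0 : ℝ) T, |deriv (x a) t| ≤ A) :
    ∀ τ : PTree (Fin d), ∀ s t : ℝ, 0 ≤ s → s ≤ t → t ≤ T →
      |Xtree x τ t s| ≤ (A * (t - s)) ^ (sizeT τ) / (factT τ : ℝ) := by
  intro τ s t hs hst htT
  exact (tree_aux d x hx T A hT hA (sizeT τ) τ le_rfl).2.2 s t hs hst htT
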